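/- For every ε ∈ (0, 1/2) and all n ≥ some threshold depending on ε, and for every k ≤ n, the number of half-space self-avoiding walks of length k on ℤ² whose branch decomposition has fewer than 7·n^{1/2−ε} terms is at most exp(8·n^{1/2−ε}·log n) · μ^k. -/

import Mathlib

/-- A self-avoiding walk of length `n` on `ℤ²`, starting at the origin, with
nearest-neighbour steps, padded to be constant after time `n`. -/
def IsSAW (n : ℕ) (γ : ℕ → ℤ × ℤ) : Prop :=
  γ 0 = (0, 0) ∧
  (∀ i < n, |(γ (i + 1)).1 - (γ i).1| + |(γ (i + 1)).2 - (γ i).2| = 1) ∧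
  (∀ i ≤ n, ∀ j ≤ n, γ i = γ j → i = j) ∧
  (∀ i, n ≤ i → γ i = γ n)

/-- The number of self-avoiding walks of length `n` on `ℤ²` starting at the origin. -/
noncomputable def cSAW (n : ℕ) : ℕ := Nat.card {γ : ℕ → ℤ × ℤ // IsSAW n γ}

/-- The connective constant `μ` of `ℤ²`, i.e. `lim_n cSAW n ^ (1/n)`, which by
submultiplicativity equals the infimum `⨅_{n ≥ 1} (cSAW n)^(1/n)`. -/
noncomputable def mu : ℝ := ⨅ n : ℕ, ((cSAW (n + 1) : ℝ)) ^ ((1 : ℝ) / (n + 1))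

/-- A self-avoiding bridge of length `n` on `ℤ²`: a self-avoiding walk `γ` from the
origin with `0 < y(γ k) ≤ y(γ n)` for all `1 ≤ k ≤ n`. -/
def IsBridge (n : ℕ) (γ : ℕ → ℤ × ℤ) : Prop :=
  IsSAW n γ ∧ ∀ k : ℕ, 0 < k → k ≤ n → 0 < (γ k).2 ∧ (γ k).2 ≤ (γ n).2

/-- The number of self-avoiding bridges of length `n` on `ℤ²`. -/
noncomputable def cSAB (n : ℕ) : ℕ := Nat.card {γ : ℕ → ℤ × ℤ // IsBridge n γ}

/-- A half-space self-avoiding walk of length `n` on `ℤ²`: a self-avoiding walk `γ`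
from the origin with `y(γ k) > 0` for all `0 < k ≤ n`. -/
def IsHSW (n : ℕ) (γ : ℕ → ℤ × ℤ) : Prop :=
  IsSAW n γ ∧ ∀ k : ℕ, 0 < k → k ≤ n → 0 < (γ k).2

/-- The number of half-space self-avoiding walks of length `n` on `ℤ²`. -/
noncomputable def cHSW (n : ℕ) : ℕ := Nat.card {γ : ℕ → ℤ × ℤ // IsHSW n γ}

/-- The last time in `[a, n]` at which the walk `γ` attains its maximal (if `takeMax`)
or minimal (otherwise) `y`-coordinate over `[a, n]`. -/
noncomputable def nextRecord (γ : ℕ → ℤ × ℤ) (n a : ℕ) (takeMax : Bool) : ℕ :=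
  sSup {t : ℕ | a ≤ t ∧ t ≤ n ∧ ∀ s : ℕ, a ≤ s → s ≤ n →
    cond takeMax ((γ s).2 ≤ (γ t).2) ((γ t).2 ≤ (γ s).2)}

/-- The record points `a_0 = 0, a_1, a_2, …` of the branch decomposition: `a_{k+1}` is
the last time `γ` restricted to `[a_k, n]` attains its maximal (for `a_{k+1}` with
odd index) or minimal (even index) `y`-coordinate. -/
noncomputable def recordTime (γ : ℕ → ℤ × ℤ) (n : ℕ) : ℕ → ℕ
  | 0 => 0
  | k + 1 => nextRecord γ n (recordTime γ n k) (k % 2 == 0)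

/-- The number of branches of the branch decomposition of a half-space walk of
length `n`: the first `k` with `a_k = n`. -/
noncomputable def numBranches (γ : ℕ → ℤ × ℤ) (n : ℕ) : ℕ :=
  sInf {k : ℕ | recordTime γ n k = n}


/-!
Cutting a half-space walk at the last time `a₁` it reaches its maximal height gives a
bridge `γ[0, a₁]`, followed by a walk which, reflected in the horizontal line through `γ a₁`,
is again a half-space walk; its record times are those of `γ` shifted by one index and by
`a₁`. Bridges of length `j` number at most `μ ^ j` (bridges concatenate while walks split),
so induction on the number of branches bounds the half-space walks of length `k` with at
most `m` branches by `(k + 1) ^ m * μ ^ k`. For `m ≤ 7 n ^ (1/2 - ε)`, `k ≤ n` and `n ≥ 128`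
one has `(k + 1) ^ m ≤ exp (8 n ^ (1/2 - ε) log n)`.
-/

section SelfAvoidingWalks

variable {n a L : ℕ} {γ δ : ℕ → ℤ × ℤ}

theorem IsSAW.ext (hγ : IsSAW n γ) (hδ : IsSAW n δ) (h : ∀ i ≤ n, γ i = δ i) : γ = δ := by
  funext t
  rcases le_total t n with ht | ht
  · exact h t ht
  · rw [hγ.2.2.2 t ht, hδ.2.2.2 t ht, h n le_rfl]

theorem IsSAW.abs_add_abs_le (hγ : IsSAW n γ) {i : ℕ} (hi : i ≤ n) :
    |(γ i).1| + |(γ i).2| ≤ i := by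
  induction i with
  | zero => simp [hγ.1]
  | succ i ih =>
    have hstep := hγ.2.1 i (by omega)
    have h1 := abs_sub_abs_le_abs_sub (γ (i + 1)).1 (γ i).1
    have h2 := abs_sub_abs_le_abs_sub (γ (i + 1)).2 (γ i).2
    push_cast
    linarith [ih (by omega)]

instance (n : ℕ) : Finite {γ : ℕ → ℤ × ℤ // IsSAW n γ} := by
  let box := Set.Icc (-(n : ℤ), -(n : ℤ)) ((n : ℤ), (n : ℤ))
  have mem_box (γ : {γ // IsSAW n γ}) (i : Fin (n + 1)) : γ.1 i ∈ box := by
    have hγi := γ.2.abs_add_abs_le (i := i) (by omega)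
    have hi : (i : ℤ) ≤ n := by exact_mod_cast Nat.lt_succ_iff.mp i.2
    have hx : |(γ.1 i).1| ≤ n := by linarith [abs_nonneg (γ.1 i).2]
    have hy : |(γ.1 i).2| ≤ n := by linarith [abs_nonneg (γ.1 i).1]
    rw [abs_le] at hx hy
    exact ⟨⟨hx.1, hy.1⟩, hx.2, hy.2⟩
  refine Finite.of_injective (fun γ (i : Fin (n + 1)) => (⟨γ.1 i, mem_box γ i⟩ : box))
    fun γ δ h => ?_
  exact Subtype.ext (γ.2.ext δ.2 fun i hi => congrArg Subtype.val (congrFun h ⟨i, by omega⟩))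

theorem finite_of_isSAW {P : (ℕ → ℤ × ℤ) → Prop} (h : ∀ γ, P γ → IsSAW n γ) :
    Finite {γ // P γ} :=
  Finite.of_injective (fun γ => (⟨γ.1, h _ γ.2⟩ : {γ // IsSAW n γ}))
    fun _ _ e => Subtype.ext (congrArg Subtype.val e :)

instance (n : ℕ) : Finite {γ : ℕ → ℤ × ℤ // IsBridge n γ} := finite_of_isSAW fun _ h => h.1

instance (n : ℕ) (P : (ℕ → ℤ × ℤ) → Prop) : Finite {γ : ℕ → ℤ × ℤ // IsHSW n γ ∧ P γ} :=
  finite_of_isSAW fun _ h => h.1.1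

theorem card_le_one_of_isSAW_zero {P : (ℕ → ℤ × ℤ) → Prop} (h : ∀ γ, P γ → IsSAW 0 γ) :
    Nat.card {γ // P γ} ≤ 1 := by
  have := finite_of_isSAW h
  rw [Finite.card_le_one_iff_subsingleton]
  refine ⟨fun γ δ => Subtype.ext ((h _ γ.2).ext (h _ δ.2) fun i hi => ?_)⟩
  rw [Nat.le_zero.mp hi, (h _ γ.2).1, (h _ δ.2).1]

def walkPrefix (γ : ℕ → ℤ × ℤ) (a : ℕ) : ℕ → ℤ × ℤ := fun t => γ (min t a)

def walkSegment (γ : ℕ → ℤ × ℤ) (a L : ℕ) : ℕ → ℤ × ℤ := fun t => γ (a + min t L) - γ a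

def reflectY (γ : ℕ → ℤ × ℤ) : ℕ → ℤ × ℤ := fun t => ((γ t).1, -(γ t).2)

theorem reflectY_injective : Function.Injective reflectY :=
  Function.LeftInverse.injective (g := reflectY) fun γ => by funext t; simp [reflectY]

theorem isSAW_walkPrefix (hγ : IsSAW n γ) (ha : a ≤ n) : IsSAW a (walkPrefix γ a) := by
  refine ⟨by simp [walkPrefix, hγ.1], fun i hi => ?_, fun i hi j hj he => ?_, fun i hi => ?_⟩
  · simpa [walkPrefix, min_eq_left hi.le, min_eq_left (Nat.succ_le_of_lt hi)]
      using hγ.2.1 i (by omega)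
  · simp only [walkPrefix, min_eq_left hi, min_eq_left hj] at he
    exact hγ.2.2.1 i (by omega) j (by omega) he
  · simp [walkPrefix, min_eq_right hi]

theorem isSAW_walkSegment (hγ : IsSAW n γ) (h : a + L ≤ n) : IsSAW L (walkSegment γ a L) := by
  refine ⟨by simp [walkSegment]; rfl, fun i hi => ?_, fun i hi j hj he => ?_, fun i hi => ?_⟩
  · simpa [walkSegment, min_eq_left hi.le, min_eq_left (Nat.succ_le_of_lt hi), ← add_assoc]
      using hγ.2.1 (a + i) (by omega)
  · simp only [walkSegment, min_eq_left hi, min_eq_left hj, sub_left_inj] at he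
    have := hγ.2.2.1 (a + i) (by omega) (a + j) (by omega) he
    omega
  · simp [walkSegment, min_eq_right hi]

theorem isSAW_reflectY (hγ : IsSAW n γ) : IsSAW n (reflectY γ) := by
  refine ⟨by simp [reflectY, hγ.1], fun i hi => ?_, fun i hi j hj he => ?_, fun i hi => ?_⟩
  · simpa [reflectY, neg_add_eq_sub, abs_sub_comm] using hγ.2.1 i hi
  · simp only [reflectY, Prod.mk.injEq, neg_inj] at he
    exact hγ.2.2.1 i hi j hj (Prod.ext he.1 he.2)
  · simp [reflectY, hγ.2.2.2 i hi]

end SelfAvoidingWalks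

section Counting

variable {n a b t : ℕ} {γ δ α β : ℕ → ℤ × ℤ}

theorem IsSAW.eq_of_walkPrefix_eq_of_walkSegment_eq (hγ : IsSAW n γ) (hδ : IsSAW n δ)
    (ha : a ≤ n) (hpre : walkPrefix γ a = walkPrefix δ a)
    (hseg : walkSegment γ a (n - a) = walkSegment δ a (n - a)) : γ = δ := by
  have hγa : γ a = δ a := by simpa [walkPrefix] using congrFun hpre a
  refine hγ.ext hδ fun t ht => ?_
  rcases le_total t a with hta | hat
  · simpa [walkPrefix, hta] using congrFun hpre t
  · have := congrFun hseg (t - a)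
    simp only [walkSegment, min_eq_left (show t - a ≤ n - a by omega),
      Nat.add_sub_cancel' hat, hγa, sub_left_inj] at this
    exact this

theorem cSAW_add_le (a b : ℕ) : cSAW (a + b) ≤ cSAW a * cSAW b := by
  rw [cSAW, cSAW, cSAW, ← Nat.card_prod]
  refine Nat.card_le_card_of_injective (fun γ =>
    (⟨walkPrefix γ.1 a, isSAW_walkPrefix γ.2 (by omega)⟩,
      ⟨walkSegment γ.1 a b, isSAW_walkSegment γ.2 le_rfl⟩)) fun γ δ h => ?_
  simp only [Prod.mk.injEq, Subtype.mk.injEq] at h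
  refine Subtype.ext (γ.2.eq_of_walkPrefix_eq_of_walkSegment_eq δ.2 (by omega) h.1 ?_)
  rw [Nat.add_sub_cancel_left]
  exact h.2

theorem cSAW_mul_le (n : ℕ) {m : ℕ} (hm : 0 < m) : cSAW (n * m) ≤ cSAW n ^ m := by
  induction m, hm using Nat.le_induction with
  | base => simp
  | succ m _ ih =>
    calc cSAW (n * (m + 1)) = cSAW (n * m + n) := by rw [Nat.mul_succ]
      _ ≤ cSAW (n * m) * cSAW n := cSAW_add_le _ _
      _ ≤ cSAW n ^ m * cSAW n := Nat.mul_le_mul_right _ ih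
      _ = cSAW n ^ (m + 1) := (pow_succ _ _).symm

theorem IsBridge.snd_le (hα : IsBridge a α) {s : ℕ} (hs : s ≤ a) :
    0 ≤ (α s).2 ∧ (α s).2 ≤ (α a).2 := by
  rcases Nat.eq_zero_or_pos s with rfl | hs0
  · rcases Nat.eq_zero_or_pos a with rfl | ha
    · simp [hα.1.1]
    · simpa [hα.1.1] using (hα.2 a ha le_rfl).1.le
  · exact ⟨(hα.2 s hs0 hs).1.le, (hα.2 s hs0 hs).2⟩

def bridgeConcat (α β : ℕ → ℤ × ℤ) (a : ℕ) : ℕ → ℤ × ℤ :=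
  fun t => if t ≤ a then α t else α a + β (t - a)

theorem bridgeConcat_of_le (ht : t ≤ a) : bridgeConcat α β a t = α t := if_pos ht

theorem bridgeConcat_of_ge (hβ0 : β 0 = 0) (ht : a ≤ t) :
    bridgeConcat α β a t = α a + β (t - a) := by
  unfold bridgeConcat
  split_ifs with h
  · rw [le_antisymm h ht, Nat.sub_self, hβ0, add_zero]
  · rfl

/-- Up to time `a` the concatenation stays at height at most `α a`, afterwards strictly
above. -/
theorem IsBridge.eq_of_bridgeConcat_eq (hα : IsBridge a α) (hβ : IsBridge b β) {i j : ℕ}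
    (hi : i ≤ a + b) (hj : j ≤ a + b) (he : bridgeConcat α β a i = bridgeConcat α β a j) :
    i = j := by
  wlog hij : i ≤ j generalizing i j
  · exact (this hj hi he.symm (by omega)).symm
  rcases le_or_gt j a with hja | haj
  · rw [bridgeConcat_of_le (by omega), bridgeConcat_of_le hja] at he
    exact hα.1.2.2.1 i (by omega) j (by omega) he
  rw [bridgeConcat_of_ge hβ.1.1 haj.le] at he
  rcases le_or_gt a i with hai | hia
  · rw [bridgeConcat_of_ge hβ.1.1 hai, add_right_inj] at he
    have := hβ.1.2.2.1 (i - a) (by omega) (j - a) (by omega) he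
    omega
  · have hyi := (hα.snd_le hia.le).2
    have hyj := (hβ.2 (j - a) (by omega) (by omega)).1
    rw [bridgeConcat_of_le hia.le] at he
    have := congrArg Prod.snd he
    simp only [Prod.snd_add] at this
    omega

theorem IsBridge.concat (hα : IsBridge a α) (hβ : IsBridge b β) :
    IsBridge (a + b) (bridgeConcat α β a) := by
  have left (t : ℕ) (ht : t ≤ a) := bridgeConcat_of_le (α := α) (β := β) ht
  have right (t : ℕ) (ht : a ≤ t) := bridgeConcat_of_ge (α := α) hβ.1.1 ht
  have hend : bridgeConcat α β a (a + b) = α a + β b := by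
    rw [right _ (by omega), Nat.add_sub_cancel_left]
  have hβb := (hβ.snd_le le_rfl).1
  have hαa := (hα.snd_le le_rfl).1
  refine ⟨⟨?_, fun i hi => ?_, fun i hi j hj he => hα.eq_of_bridgeConcat_eq hβ hi hj he,
    fun i hi => ?_⟩, fun t ht htn => ?_⟩
  · rw [left 0 (Nat.zero_le a)]
    exact hα.1.1
  · rcases lt_or_ge i a with h | h
    · rw [left i h.le, left (i + 1) h]
      exact hα.1.2.1 i h
    · rw [right i h, right (i + 1) (by omega), Nat.sub_add_comm h]
      simpa using hβ.1.2.1 (i - a) (by omega)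
  · rw [right i (by omega), hend, hβ.1.2.2.2 (i - a) (by omega)]
  · rw [hend, Prod.snd_add]
    rcases le_or_gt t a with hta | hat
    · rw [left t hta]
      have := (hα.snd_le hta).2
      exact ⟨(hα.2 t ht hta).1, by omega⟩
    · rw [right t hat.le, Prod.snd_add]
      have := hβ.2 (t - a) (by omega) (by omega)
      have := (hβ.snd_le (s := t - a) (by omega)).2
      omega

theorem walkPrefix_bridgeConcat (hα : IsSAW a α) : walkPrefix (bridgeConcat α β a) a = α := by
  funext t
  simp only [walkPrefix, bridgeConcat_of_le (min_le_right t a)]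
  rcases le_total t a with h | h
  · rw [min_eq_left h]
  · rw [min_eq_right h, hα.2.2.2 t h]

theorem walkSegment_bridgeConcat (hβ : IsSAW b β) :
    walkSegment (bridgeConcat α β a) a b = β := by
  funext t
  simp only [walkSegment, bridgeConcat_of_le le_rfl,
    bridgeConcat_of_ge hβ.1 (Nat.le_add_right a _),
    Nat.add_sub_cancel_left, add_sub_cancel_left]
  rcases le_total t b with h | h
  · rw [min_eq_left h]
  · rw [min_eq_right h, hβ.2.2.2 t h]

theorem cSAB_mul_cSAB_le (a b : ℕ) : cSAB a * cSAB b ≤ cSAB (a + b) := by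
  rw [cSAB, cSAB, cSAB, ← Nat.card_prod]
  refine Nat.card_le_card_of_injective
    (fun p => ⟨bridgeConcat p.1.1 p.2.1 a, p.1.2.concat p.2.2⟩) ?_
  rintro ⟨⟨α, hα⟩, ⟨β, hβ⟩⟩ ⟨⟨α', hα'⟩, ⟨β', hβ'⟩⟩ h
  have h : bridgeConcat α β a = bridgeConcat α' β' a := congrArg Subtype.val h
  simp only [Prod.mk.injEq, Subtype.mk.injEq]
  constructor
  · rw [← walkPrefix_bridgeConcat (β := β) hα.1, h, walkPrefix_bridgeConcat hα'.1]
  · rw [← walkSegment_bridgeConcat (α := α) (a := a) hβ.1, h, walkSegment_bridgeConcat hβ'.1]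

theorem pow_cSAB_le (j : ℕ) {m : ℕ} (hm : 0 < m) : cSAB j ^ m ≤ cSAB (j * m) := by
  induction m, hm using Nat.le_induction with
  | base => simp
  | succ m _ ih =>
    calc cSAB j ^ (m + 1) = cSAB j ^ m * cSAB j := pow_succ _ _
      _ ≤ cSAB (j * m) * cSAB j := Nat.mul_le_mul_right _ ih
      _ ≤ cSAB (j * m + j) := cSAB_mul_cSAB_le _ _
      _ = cSAB (j * (m + 1)) := by rw [Nat.mul_succ]

theorem cSAB_le_cSAW (n : ℕ) : cSAB n ≤ cSAW n :=
  Nat.card_le_card_of_injective (fun γ => ⟨γ.1, γ.2.1⟩)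
    fun _ _ h => Subtype.ext (congrArg Subtype.val h :)

theorem mu_nonneg : 0 ≤ mu := le_ciInf fun _ => Real.rpow_nonneg (Nat.cast_nonneg _) _

theorem rpow_one_div_le_rpow_one_div_of_pow_le {x y : ℝ} (hx : 0 ≤ x) (hy : 0 ≤ y) {p q : ℕ}
    (hp : 0 < p) (hq : 0 < q) (h : x ^ q ≤ y ^ p) :
    x ^ ((1 : ℝ) / p) ≤ y ^ ((1 : ℝ) / q) := by
  have root (z : ℝ) (hz : 0 ≤ z) (r s : ℕ) (hr : 0 < r) (hs : 0 < s) :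
      z ^ ((1 : ℝ) / s) = (z ^ r) ^ ((1 : ℝ) / (s * r)) := by
    rw [← Real.rpow_natCast, ← Real.rpow_mul hz]
    congr 1
    field_simp
  rw [root x hx q p hq hp, root y hy p q hp hq, mul_comm (q : ℝ)]
  exact Real.rpow_le_rpow (pow_nonneg hx q) h (by positivity)

theorem cSAB_le_mu_pow (j : ℕ) : (cSAB j : ℝ) ≤ mu ^ j := by
  rcases Nat.eq_zero_or_pos j with rfl | hj
  · have : cSAB 0 ≤ 1 := card_le_one_of_isSAW_zero fun γ (h : IsBridge 0 γ) => h.1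
    simpa using this
  have hroot : (cSAB j : ℝ) ^ ((1 : ℝ) / j) ≤ mu := le_ciInf fun n => by
    have h : cSAB j ^ (n + 1) ≤ cSAW (n + 1) ^ j :=
      calc cSAB j ^ (n + 1) ≤ cSAB (j * (n + 1)) := pow_cSAB_le j n.succ_pos
        _ ≤ cSAW (j * (n + 1)) := cSAB_le_cSAW _
        _ ≤ cSAW (n + 1) ^ j := by rw [mul_comm]; exact cSAW_mul_le _ hj
    simpa using rpow_one_div_le_rpow_one_div_of_pow_le (Nat.cast_nonneg _) (Nat.cast_nonneg _)
      hj n.succ_pos (by exact_mod_cast h)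
  calc (cSAB j : ℝ) = ((cSAB j : ℝ) ^ ((1 : ℝ) / j)) ^ j := by
        rw [← Real.rpow_natCast, ← Real.rpow_mul (Nat.cast_nonneg _),
          one_div_mul_cancel (by positivity), Real.rpow_one]
    _ ≤ mu ^ j := pow_le_pow_left₀ (by positivity) hroot j

end Counting

section BranchDecomposition

variable {n k a b t j : ℕ} {γ δ : ℕ → ℤ × ℤ}

def recordCandidates (γ : ℕ → ℤ × ℤ) (n a : ℕ) (takeMax : Bool) : Set ℕ :=
  {t : ℕ | a ≤ t ∧ t ≤ n ∧ ∀ s : ℕ, a ≤ s → s ≤ n →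
    cond takeMax ((γ s).2 ≤ (γ t).2) ((γ t).2 ≤ (γ s).2)}

theorem bddAbove_recordCandidates (γ : ℕ → ℤ × ℤ) (n a : ℕ) (takeMax : Bool) :
    BddAbove (recordCandidates γ n a takeMax) :=
  ⟨n, fun _ ht => ht.2.1⟩

theorem recordCandidates_nonempty (ha : a ≤ n) (takeMax : Bool) :
    (recordCandidates γ n a takeMax).Nonempty := by
  have hne : (Finset.Icc a n).Nonempty := ⟨a, Finset.mem_Icc.2 ⟨le_rfl, ha⟩⟩
  cases takeMax
  · obtain ⟨t, ht, hmin⟩ := Finset.exists_min_image (Finset.Icc a n) (fun s => (γ s).2) hne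
    rw [Finset.mem_Icc] at ht
    exact ⟨t, ht.1, ht.2, fun s hs hsn => hmin s (Finset.mem_Icc.2 ⟨hs, hsn⟩)⟩
  · obtain ⟨t, ht, hmax⟩ := Finset.exists_max_image (Finset.Icc a n) (fun s => (γ s).2) hne
    rw [Finset.mem_Icc] at ht
    exact ⟨t, ht.1, ht.2, fun s hs hsn => hmax s (Finset.mem_Icc.2 ⟨hs, hsn⟩)⟩

theorem nextRecord_mem (ha : a ≤ n) (takeMax : Bool) :
    nextRecord γ n a takeMax ∈ recordCandidates γ n a takeMax :=
  Nat.sSup_mem (recordCandidates_nonempty ha takeMax) (bddAbove_recordCandidates γ n a takeMax)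

theorem le_nextRecord {takeMax : Bool} (ht : t ∈ recordCandidates γ n a takeMax) :
    t ≤ nextRecord γ n a takeMax :=
  le_csSup (bddAbove_recordCandidates γ n a takeMax) ht

theorem nextRecord_self (γ : ℕ → ℤ × ℤ) (n : ℕ) (takeMax : Bool) :
    nextRecord γ n n takeMax = n := by
  obtain ⟨h1, h2, -⟩ := nextRecord_mem (γ := γ) (le_refl n) takeMax
  omega

theorem snd_lt_nextRecord_true (ha : a ≤ n) (ht : nextRecord γ n a true < t) (htn : t ≤ n) :
    (γ t).2 < (γ (nextRecord γ n a true)).2 := by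
  obtain ⟨har, -, hmax⟩ := nextRecord_mem (γ := γ) ha true
  refine lt_of_le_of_ne (hmax t (by omega) htn) fun heq => ?_
  have : t ∈ recordCandidates γ n a true :=
    ⟨by omega, htn, fun s hs hsn => heq ▸ hmax s hs hsn⟩
  exact absurd (le_nextRecord this) (not_le.mpr ht)

theorem recordTime_le (γ : ℕ → ℤ × ℤ) (n j : ℕ) : recordTime γ n j ≤ n := by
  induction j with
  | zero => exact Nat.zero_le n
  | succ j ih => exact (nextRecord_mem ih _).2.1

theorem recordTime_mono (γ : ℕ → ℤ × ℤ) (n : ℕ) : Monotone (recordTime γ n) :=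
  monotone_nat_of_le_succ fun j => (nextRecord_mem (recordTime_le γ n j) _).1

theorem recordTime_eq_of_le (h : recordTime γ n j = n) {m : ℕ} (hjm : j ≤ m) :
    recordTime γ n m = n := by
  induction m, hjm using Nat.le_induction with
  | base => exact h
  | succ m _ ih =>
    change nextRecord γ n (recordTime γ n m) _ = n
    rw [ih, nextRecord_self]

theorem nextRecord_reflectY_walkSegment (hab : a ≤ b) (hbn : b ≤ n) (takeMax : Bool) :
    nextRecord (reflectY (walkSegment γ a (n - a))) (n - a) (b - a) takeMax =
      nextRecord γ n b (!takeMax) - a := by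
  set ρ := reflectY (walkSegment γ a (n - a))
  have hρ (u : ℕ) (hu : u ≤ n - a) : (ρ u).2 = (γ a).2 - (γ (a + u)).2 := by
    simp [ρ, reflectY, walkSegment, min_eq_left hu]
  have hmem (t : ℕ) :
      t ∈ recordCandidates ρ (n - a) (b - a) takeMax ↔
        a + t ∈ recordCandidates γ n b (!takeMax) := by
    simp only [recordCandidates, Set.mem_ofPred_eq]
    constructor
    · rintro ⟨h1, h2, h3⟩
      refine ⟨by omega, by omega, fun s hs hsn => ?_⟩
      have := h3 (s - a) (by omega) (by omega)
      rw [hρ _ (by omega), hρ t h2, Nat.add_sub_cancel' (by omega)] at this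
      cases takeMax <;> simp only [cond, Bool.not_true, Bool.not_false] at this ⊢ <;> omega
    · rintro ⟨h1, h2, h3⟩
      refine ⟨by omega, by omega, fun s hs hsn => ?_⟩
      have := h3 (a + s) (by omega) (by omega)
      rw [hρ s hsn, hρ t (by omega)]
      cases takeMax <;> simp only [cond, Bool.not_true, Bool.not_false] at this ⊢ <;> omega
  have hr := nextRecord_mem (γ := γ) hbn (!takeMax)
  refine (IsGreatest.csSup_eq ⟨?_, fun t ht => ?_⟩ :
    sSup (recordCandidates ρ (n - a) (b - a) takeMax) = _)
  · rw [hmem, Nat.add_sub_cancel' (hab.trans hr.1)]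
    exact hr
  · have := le_nextRecord ((hmem t).1 ht)
    omega

noncomputable def firstBranch (γ : ℕ → ℤ × ℤ) (k : ℕ) : ℕ → ℤ × ℤ :=
  walkPrefix γ (recordTime γ k 1)

noncomputable def branchTail (γ : ℕ → ℤ × ℤ) (k : ℕ) : ℕ → ℤ × ℤ :=
  reflectY (walkSegment γ (recordTime γ k 1) (k - recordTime γ k 1))

theorem recordTime_branchTail (γ : ℕ → ℤ × ℤ) (k j : ℕ) :
    recordTime (branchTail γ k) (k - recordTime γ k 1) j =
      recordTime γ k (j + 1) - recordTime γ k 1 := by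
  induction j with
  | zero => exact (Nat.sub_self _).symm
  | succ j ih =>
    have hparity : ((j + 1) % 2 == 0) = !(j % 2 == 0) := by
      rcases Nat.mod_two_eq_zero_or_one j with h | h <;> simp [Nat.add_mod, h]
    change nextRecord (branchTail γ k) _ (recordTime (branchTail γ k) _ j) _ =
      nextRecord γ k (recordTime γ k (j + 1)) _ - _
    rw [ih, branchTail, nextRecord_reflectY_walkSegment
      (recordTime_mono γ k (by omega)) (recordTime_le γ k _), hparity]

theorem IsHSW.isBridge_firstBranch (hγ : IsHSW k γ) :
    IsBridge (recordTime γ k 1) (firstBranch γ k) := by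
  have hmax := (nextRecord_mem (γ := γ) (Nat.zero_le k) true).2.2
  refine ⟨isSAW_walkPrefix hγ.1 (recordTime_le γ k 1), fun t ht hta => ?_⟩
  simp only [firstBranch, walkPrefix, min_eq_left hta, min_self]
  exact ⟨hγ.2 t ht (hta.trans (recordTime_le γ k 1)),
    hmax t (Nat.zero_le t) (hta.trans (recordTime_le γ k 1))⟩

theorem IsHSW.isHSW_branchTail (hγ : IsHSW k γ) :
    IsHSW (k - recordTime γ k 1) (branchTail γ k) := by
  have hak := recordTime_le γ k 1
  refine ⟨isSAW_reflectY (isSAW_walkSegment hγ.1 (by omega)), fun t ht htk => ?_⟩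
  have := snd_lt_nextRecord_true (γ := γ) (Nat.zero_le k) (t := recordTime γ k 1 + t)
    (by change recordTime γ k 1 < _; omega) (by omega)
  simp only [branchTail, reflectY, walkSegment, min_eq_left htk, Prod.snd_sub]
  change _ < (γ (recordTime γ k 1)).2 at this
  omega

theorem IsHSW.recordTime_one_pos (hγ : IsHSW k γ) (hk : 0 < k) : 0 < recordTime γ k 1 := by
  refine Nat.pos_of_ne_zero fun h0 => ?_
  have hmax := (nextRecord_mem (γ := γ) (Nat.zero_le k) true).2.2 k (Nat.zero_le k) le_rfl
  change (γ k).2 ≤ (γ (recordTime γ k 1)).2 at hmax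
  rw [h0, hγ.1.1] at hmax
  exact absurd (hγ.2 k hk le_rfl) (not_lt.mpr hmax)

theorem IsHSW.exists_recordTime_eq (hγ : IsHSW k γ) : ∃ j, recordTime γ k j = k := by
  induction k using Nat.strong_induction_on generalizing γ with
  | _ k ih =>
  rcases Nat.eq_zero_or_pos k with rfl | hk
  · exact ⟨0, rfl⟩
  have h1 := hγ.recordTime_one_pos hk
  obtain ⟨j, hj⟩ := ih _ (by omega) hγ.isHSW_branchTail
  rw [recordTime_branchTail] at hj
  have := recordTime_le γ k (j + 1)
  have := recordTime_mono γ k (show 1 ≤ j + 1 by omega)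
  exact ⟨j + 1, by omega⟩

theorem IsHSW.recordTime_eq_of_numBranches_le (hγ : IsHSW k γ) {m : ℕ}
    (hm : numBranches γ k ≤ m) : recordTime γ k m = k :=
  recordTime_eq_of_le (Nat.sInf_mem hγ.exists_recordTime_eq) hm

theorem IsHSW.eq_of_firstBranch_eq (hγ : IsHSW k γ) (hδ : IsHSW k δ)
    (h1 : recordTime γ k 1 = recordTime δ k 1) (hfirst : firstBranch γ k = firstBranch δ k)
    (htail : branchTail γ k = branchTail δ k) : γ = δ := by
  rw [firstBranch, firstBranch, h1] at hfirst
  rw [branchTail, branchTail, h1] at htail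
  exact hγ.1.eq_of_walkPrefix_eq_of_walkSegment_eq hδ.1 (recordTime_le δ k 1) hfirst
    (reflectY_injective htail)

end BranchDecomposition

noncomputable def cHSWBranchesLe (m k : ℕ) : ℕ :=
  Nat.card {γ : ℕ → ℤ × ℤ // IsHSW k γ ∧ recordTime γ k m = k}

theorem cHSWBranchesLe_succ_le (m k : ℕ) :
    cHSWBranchesLe (m + 1) k ≤ ∑ a : Fin (k + 1), cSAB a * cHSWBranchesLe m (k - a) := by
  let Piece (a : Fin (k + 1)) : Type := {β : ℕ → ℤ × ℤ // IsBridge a β} ×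
    {δ : ℕ → ℤ × ℤ // IsHSW (k - a) δ ∧ recordTime δ (k - a) m = k - a}
  let split (γ : {γ : ℕ → ℤ × ℤ // IsHSW k γ ∧ recordTime γ k (m + 1) = k}) :
      (a : Fin (k + 1)) × Piece a :=
    ⟨⟨recordTime γ.1 k 1, Nat.lt_succ_of_le (recordTime_le γ.1 k 1)⟩,
      ⟨firstBranch γ.1 k, γ.2.1.isBridge_firstBranch⟩,
      ⟨branchTail γ.1 k, γ.2.1.isHSW_branchTail, by rw [recordTime_branchTail, γ.2.2]⟩⟩
  have hsplit : Function.Injective split := fun γ δ h => by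
    have h' := congrArg
      (fun x : (a : Fin (k + 1)) × Piece a => ((x.1 : ℕ), x.2.1.1, x.2.2.1)) h
    simp only [split, Prod.mk.injEq] at h'
    exact Subtype.ext (γ.2.1.eq_of_firstBranch_eq δ.2.1 h'.1 h'.2.1 h'.2.2)
  calc _ ≤ Nat.card ((a : Fin (k + 1)) × Piece a) := Nat.card_le_card_of_injective split hsplit
    _ = _ := by simp only [Nat.card_sigma, Piece, Nat.card_prod]; rfl

theorem cHSWBranchesLe_le (m k : ℕ) :
    (cHSWBranchesLe m k : ℝ) ≤ ((k : ℝ) + 1) ^ m * mu ^ k := by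
  induction m generalizing k with
  | zero =>
    rcases Nat.eq_zero_or_pos k with rfl | hk
    · have : cHSWBranchesLe 0 0 ≤ 1 := card_le_one_of_isSAW_zero fun γ h => h.1.1
      simpa using this
    · have : IsEmpty {γ : ℕ → ℤ × ℤ // IsHSW k γ ∧ recordTime γ k 0 = k} :=
        ⟨fun γ => hk.ne γ.2.2⟩
      simp [cHSWBranchesLe, Nat.card_of_isEmpty, pow_nonneg mu_nonneg]
  | succ m ih =>
    have hterm (a : Fin (k + 1)) :
        (cSAB a : ℝ) * cHSWBranchesLe m (k - a) ≤ ((k : ℝ) + 1) ^ m * mu ^ k :=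
      calc _ ≤ mu ^ (a : ℕ) * ((((k - a : ℕ) : ℝ) + 1) ^ m * mu ^ (k - a)) :=
            mul_le_mul (cSAB_le_mu_pow a) (ih _) (Nat.cast_nonneg _) (pow_nonneg mu_nonneg _)
        _ = (((k - a : ℕ) : ℝ) + 1) ^ m * mu ^ k := by
            rw [mul_left_comm, ← pow_add, Nat.add_sub_cancel' (Nat.lt_succ_iff.mp a.2)]
        _ ≤ ((k : ℝ) + 1) ^ m * mu ^ k := by
            gcongr
            · exact pow_nonneg mu_nonneg k
            · exact_mod_cast Nat.sub_le k a
    calc _ ≤ ∑ a : Fin (k + 1), (cSAB a : ℝ) * cHSWBranchesLe m (k - a) := by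
          exact_mod_cast cHSWBranchesLe_succ_le m k
      _ ≤ ∑ _a : Fin (k + 1), ((k : ℝ) + 1) ^ m * mu ^ k := Finset.sum_le_sum fun a _ => hterm a
      _ = ((k : ℝ) + 1) ^ (m + 1) * mu ^ k := by simp; ring

theorem seven_mul_log_add_one_le {n : ℕ} (hn : 128 ≤ n) :
    7 * Real.log (n + 1) ≤ 8 * Real.log n := by
  have h : (n + 1) ^ 7 ≤ n ^ 8 :=
    calc (n + 1) ^ 7 ≤ (2 * n) ^ 7 := Nat.pow_le_pow_left (by omega) 7
      _ = 128 * n ^ 7 := by ring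
      _ ≤ n * n ^ 7 := Nat.mul_le_mul_right _ hn
      _ = n ^ 8 := by ring
  have := Real.log_le_log (by positivity)
    (show ((n : ℝ) + 1) ^ 7 ≤ (n : ℝ) ^ 8 by exact_mod_cast h)
  rw [Real.log_pow, Real.log_pow] at this
  exact_mod_cast this

theorem add_one_pow_floor_le_exp {n k : ℕ} (hn : 128 ≤ n) (hk : k ≤ n) {x : ℝ}
    (hx : 0 ≤ x) : ((k : ℝ) + 1) ^ ⌊7 * x⌋₊ ≤ Real.exp (8 * x * Real.log n) := by
  have hM : (⌊7 * x⌋₊ : ℝ) ≤ 7 * x := Nat.floor_le (by positivity)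
  have hlog : 0 ≤ Real.log ((n : ℝ) + 1) := Real.log_nonneg (by simp)
  calc ((k : ℝ) + 1) ^ ⌊7 * x⌋₊ ≤ ((n : ℝ) + 1) ^ ⌊7 * x⌋₊ := by gcongr
    _ = Real.exp (⌊7 * x⌋₊ * Real.log (n + 1)) := by
        rw [← Real.log_pow, Real.exp_log (by positivity)]
    _ ≤ Real.exp (8 * x * Real.log n) := Real.exp_le_exp.mpr <| by
        nlinarith [seven_mul_log_add_one_le hn, mul_le_mul_of_nonneg_right hM hlog]

theorem few_branches_bound_general (ε : ℝ) :
    ∃ N : ℕ, ∀ n : ℕ, N ≤ n → ∀ k : ℕ, k ≤ n →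
      (Nat.card {γ : ℕ → ℤ × ℤ // IsHSW k γ ∧
          (numBranches γ k : ℝ) < 7 * (n : ℝ) ^ ((1 : ℝ) / 2 - ε)} : ℝ)
        ≤ Real.exp (8 * (n : ℝ) ^ ((1 : ℝ) / 2 - ε) * Real.log n) * mu ^ k := by
  refine ⟨128, fun n hn k hk => ?_⟩
  set M := ⌊7 * (n : ℝ) ^ ((1 : ℝ) / 2 - ε)⌋₊
  have hfew : Nat.card {γ : ℕ → ℤ × ℤ // IsHSW k γ ∧
      (numBranches γ k : ℝ) < 7 * (n : ℝ) ^ ((1 : ℝ) / 2 - ε)} ≤ cHSWBranchesLe M k :=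
    Nat.card_le_card_of_injective
      (fun γ => ⟨γ.1, γ.2.1, γ.2.1.recordTime_eq_of_numBranches_le (Nat.le_floor γ.2.2.le)⟩)
      fun _ _ h => Subtype.ext (congrArg Subtype.val h :)
  calc _ ≤ (cHSWBranchesLe M k : ℝ) := by exact_mod_cast hfew
    _ ≤ ((k : ℝ) + 1) ^ M * mu ^ k := cHSWBranchesLe_le M k
    _ ≤ _ := mul_le_mul_of_nonneg_right
        (add_one_pow_floor_le_exp hn hk (Real.rpow_nonneg n.cast_nonneg _))
        (pow_nonneg mu_nonneg k)

/-- Walks with few branches are rare: for every `ε ∈ (0, 1/2)` and all large enough `n`,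
for every `k ≤ n`, the number of half-space walks of length `k` with fewer than
`7 n^{1/2−ε}` branches is at most `exp(8 n^{1/2−ε} log n) μ^k`. -/
theorem few_branches_bound (ε : ℝ) (hε0 : 0 < ε) (hε1 : ε < 1 / 2) :
    ∃ N : ℕ, ∀ n : ℕ, N ≤ n → ∀ k : ℕ, k ≤ n →
      (Nat.card {γ : ℕ → ℤ × ℤ // IsHSW k γ ∧
          (numBranches γ k : ℝ) < 7 * (n : ℝ) ^ ((1 : ℝ) / 2 - ε)} : ℝ)
        ≤ Real.exp (8 * (n : ℝ) ^ ((1 : ℝ) / 2 - ε) * Real.log n) * mu ^ k :=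
  few_branches_bound_general ε
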